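/- arXiv:1005.2987 — 2 statements merged into one kernel-verified Lean document; each statement's English description precedes it below -/
import Mathlib

section
/- Let φ : A → B be a dense and spectral morphism of unital complex Banach algebras. Then for every n ≥ 1, φ maps Lg_n(A) into Lg_n(B) and the induced map on path components [Lg_n(A)] → [Lg_n(B)] is a bijection. -/
/-!
Units of a Banach algebra form an open set, so `Lg_n(B)` is open; density and the fact that a
spectral morphism reflects invertibility show that a tuple is unimodular as soon as its image is.
Hence every convex subset of `Lg_n(B)` pulls back to a convex subset of `Lg_n(A)`. Surjectivity on
path components follows by approximating `b ∈ Lg_n(B)` inside a ball contained in `Lg_n(B)`. For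
injectivity, along a path in `Lg_n(B)` from `φ a` to `φ a'`, the set of points near which every
lift is joined to `a` is open and relatively closed, hence contains the whole path.
-/

/-- The set of unimodular `n`-tuples: tuples `(a₁, …, aₙ)` with `A·a₁ + ⋯ + A·aₙ = A`. -/
def Lg (A : Type*) [Ring A] (n : ℕ) : Set (Fin n → A) :=
  {a | ∃ x : Fin n → A, ∑ i, x i * a i = 1}

/-- The map induced on path components by a continuous map. -/
def pi0Map {X Y : Type*} [TopologicalSpace X] [TopologicalSpace Y] {f : X → Y}
    (hf : Continuous f) : ZerothHomotopy X → ZerothHomotopy Y :=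
  Quotient.map f (fun _ _ h => Nonempty.map (fun p => p.map hf) h)

/-- The map `Lg_n(A) → Lg_n(B)` induced by a unital ring morphism `φ : A → B`. -/
def lgMap {A B : Type*} [Ring A] [Ring B] (φ : A →+* B) (n : ℕ) : (Lg A n) → (Lg B n) :=
  fun a => ⟨fun i => φ (a.1 i), by
    obtain ⟨x, hx⟩ := a.2
    exact ⟨fun i => φ (x i), by
      simpa only [map_sum, map_mul, map_one] using congrArg φ hx⟩⟩

lemma continuous_lgMap {A B : Type*} [Ring A] [Ring B] [TopologicalSpace A] [TopologicalSpace B]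
    (φ : A →+* B) (n : ℕ) (hφ : Continuous φ) : Continuous (lgMap φ n) :=
  (continuous_pi fun i =>
    hφ.comp ((continuous_apply i).comp continuous_subtype_val)).subtype_mk _

open Metric Set Filter Topology

section Lg

variable {A B : Type*} [Ring A] {n : ℕ}

lemma mem_Lg_iff_exists_isUnit {a : Fin n → A} :
    a ∈ Lg A n ↔ ∃ x : Fin n → A, IsUnit (∑ i, x i * a i) := by
  refine ⟨fun ⟨x, hx⟩ => ⟨x, hx ▸ isUnit_one⟩,
    fun ⟨x, ⟨u, hu⟩⟩ => ⟨fun i => ↑u⁻¹ * x i, ?_⟩⟩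
  simp only [mul_assoc, ← Finset.mul_sum, ← hu, Units.inv_mul]

lemma isOpen_Lg [NormedRing B] [HasSummableGeomSeries B] : IsOpen (Lg B n) := by
  have : Lg B n = ⋃ y : Fin n → B, {b | IsUnit (∑ i, y i * b i)} := by
    ext b; simp only [mem_Lg_iff_exists_isUnit, mem_iUnion, mem_ofPred_eq]
  rw [this]
  exact isOpen_iUnion fun y => Units.isOpen.preimage (by fun_prop)

lemma mem_Lg_of_map_mem [NormedRing B] [HasSummableGeomSeries B] {F : Type*} [FunLike F A B]
    [RingHomClass F A B] (φ : F) [IsLocalHom φ] (hφ : DenseRange φ) {a : Fin n → A}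
    (ha : φ ∘ a ∈ Lg B n) : a ∈ Lg A n := by
  obtain ⟨y, hy⟩ := mem_Lg_iff_exists_isUnit.1 ha
  have hU : IsOpen {z : Fin n → B | IsUnit (∑ i, z i * φ (a i))} :=
    Units.isOpen.preimage (by fun_prop)
  obtain ⟨x, hx⟩ := (DenseRange.piMap fun _ => hφ).exists_mem_open hU ⟨y, hy⟩
  refine mem_Lg_iff_exists_isUnit.2 ⟨x, (isUnit_map_iff φ _).1 ?_⟩
  simpa [map_sum, map_mul] using hx

end Lg

lemma AlgHom.isLocalHom_of_spectrum_map_eq {R A B : Type*} [CommSemiring R] [Ring A] [Ring B]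
    [Algebra R A] [Algebra R B] (φ : A →ₐ[R] B)
    (hφ : ∀ a : A, spectrum R (φ a) = spectrum R a) : IsLocalHom φ where
  map_nonunit a ha := by
    by_contra h
    exact (spectrum.zero_mem_iff R).1 ((hφ a).symm ▸ (spectrum.zero_mem_iff R).2 h) ha

section Lifting

variable {A B : Type*} [NormedRing A] [NormedAlgebra ℂ A] [NormedRing B] [NormedAlgebra ℂ B]
  [HasSummableGeomSeries B] {n : ℕ} (φ : A →ₐ[ℂ] B) [IsLocalHom φ] (hφ : DenseRange φ)
include hφ

lemma joinedIn_Lg_of_map_mem_convex {S : Set (Fin n → B)} (hS : Convex ℝ S)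
    (hSLg : S ⊆ Lg B n) {a a' : Fin n → A} (ha : φ ∘ a ∈ S) (ha' : φ ∘ a' ∈ S) :
    JoinedIn (Lg A n) a a' := by
  have hconv :
      Convex ℝ (LinearMap.compLeft (φ.toLinearMap.restrictScalars ℝ) (Fin n) ⁻¹' S) :=
    hS.linear_preimage _
  exact .of_segment_subset fun x hx =>
    mem_Lg_of_map_mem φ hφ (hSLg (hconv.segment_subset ha ha' hx))

lemma joinedIn_Lg_of_joinedIn_map {a a' : Fin n → A}
    (h : JoinedIn (Lg B n) (φ ∘ a) (φ ∘ a')) : JoinedIn (Lg A n) a a' := by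
  obtain ⟨γ, hγ⟩ := h
  have hball : ∀ b ∈ Lg B n, ∃ ε > 0, ball b ε ⊆ Lg B n := Metric.isOpen_iff.1 isOpen_Lg
  set S :=
    {b : Fin n → B | ∀ᶠ c in 𝓝 b, ∀ x : Fin n → A, φ ∘ x = c → JoinedIn (Lg A n) a x}
  have ha_mem : φ ∘ a ∈ S := by
    obtain ⟨ε, hε, hsub⟩ := hball _ (γ.source ▸ hγ 0)
    filter_upwards [ball_mem_nhds _ hε] with c hc x rfl
    exact joinedIn_Lg_of_map_mem_convex φ hφ (convex_ball _ _) hsub (mem_ball_self hε) hc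
  have hclosed : closure S ∩ range γ ⊆ S := by
    rintro b ⟨hbS, t, rfl⟩
    obtain ⟨ε, hε, hsub⟩ := hball _ (hγ t)
    obtain ⟨b', hb'ball, hb'S⟩ := mem_closure_iff.1 hbS _ isOpen_ball (mem_ball_self hε)
    obtain ⟨U, hU, hUopen, hb'U⟩ :=
      _root_.eventually_nhds_iff.1 (hb'S.and (isOpen_ball.mem_nhds hb'ball))
    obtain ⟨x, hx⟩ := (DenseRange.piMap fun _ => hφ).exists_mem_open hUopen ⟨b', hb'U⟩
    obtain ⟨hxS, hxball⟩ := hU _ hx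
    filter_upwards [ball_mem_nhds _ hε] with c hc x' rfl
    exact (hxS x rfl).trans
      (joinedIn_Lg_of_map_mem_convex φ hφ (convex_ball _ _) hsub hxball hc)
  have hrange : range γ ⊆ S :=
    (isPreconnected_range γ.continuous).subset_of_closure_inter_subset
      isOpen_setOfPred_eventually_nhds ⟨φ ∘ a, ⟨0, γ.source⟩, ha_mem⟩ hclosed
  exact (hrange ⟨1, γ.target⟩).self_of_nhds a' rfl

end Lifting

lemma exists_joinedIn_Lg_map {A B F : Type*} [Ring A] [NormedRing B] [NormedSpace ℝ B]
    [HasSummableGeomSeries B] [FunLike F A B] [RingHomClass F A B] (φ : F) [IsLocalHom φ]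
    (hφ : DenseRange φ) {n : ℕ} {b : Fin n → B} (hb : b ∈ Lg B n) :
    ∃ a ∈ Lg A n, JoinedIn (Lg B n) (φ ∘ a) b := by
  obtain ⟨ε, hε, hsub⟩ := Metric.isOpen_iff.1 isOpen_Lg b hb
  obtain ⟨a, ha⟩ :=
    (DenseRange.piMap fun _ => hφ).exists_mem_open isOpen_ball ⟨b, mem_ball_self hε⟩
  exact ⟨a, mem_Lg_of_map_mem φ hφ (hsub ha),
    .of_segment_subset (((convex_ball b ε).segment_subset ha (mem_ball_self hε)).trans hsub)⟩

theorem pi0_Lg_bijective_of_dense_spectral_general {A B : Type*}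
    [NormedRing A] [NormedAlgebra ℂ A]
    [NormedRing B] [NormedAlgebra ℂ B] [CompleteSpace B]
    (φ : A →ₐ[ℂ] B) (hcont : Continuous φ) (hdense : DenseRange φ)
    (hspec : ∀ a : A, spectrum ℂ (φ a) = spectrum ℂ a) :
    ∀ n : ℕ, 1 ≤ n →
      (∀ a ∈ Lg A n, (fun i => φ (a i)) ∈ Lg B n) ∧
      Function.Bijective (pi0Map (continuous_lgMap φ.toRingHom n hcont)) := by
  intro n _
  have := φ.isLocalHom_of_spectrum_map_eq hspec
  refine ⟨fun a ha => (lgMap φ.toRingHom n ⟨a, ha⟩).2, ?_, ?_⟩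
  · rintro ⟨a⟩ ⟨a'⟩ h
    have hB : JoinedIn (Lg B n) (φ ∘ a.1) (φ ∘ a'.1) :=
      (joinedIn_iff_joined (lgMap φ.toRingHom n a).2 (lgMap φ.toRingHom n a').2).2
        (Quotient.exact h)
    exact Quotient.sound
      ((joinedIn_iff_joined a.2 a'.2).1 (joinedIn_Lg_of_joinedIn_map φ hdense hB))
  · rintro ⟨b⟩
    obtain ⟨a, ha, hab⟩ := exists_joinedIn_Lg_map φ hdense b.2
    exact ⟨⟦⟨a, ha⟩⟧, Quotient.sound ((joinedIn_iff_joined _ b.2).1 hab)⟩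

/-- If `φ : A → B` is a dense and spectral morphism of unital complex Banach algebras, then for
every `n ≥ 1`, `φ` maps `Lg_n(A)` into `Lg_n(B)` and the induced map on path components
`[Lg_n(A)] → [Lg_n(B)]` is a bijection. -/
theorem pi0_Lg_bijective_of_dense_spectral {A B : Type*}
    [NormedRing A] [NormedAlgebra ℂ A] [CompleteSpace A]
    [NormedRing B] [NormedAlgebra ℂ B] [CompleteSpace B]
    (φ : A →ₐ[ℂ] B) (hcont : Continuous φ) (hdense : DenseRange φ)
    (hspec : ∀ a : A, spectrum ℂ (φ a) = spectrum ℂ a) :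
    ∀ n : ℕ, 1 ≤ n →
      (∀ a ∈ Lg A n, (fun i => φ (a i)) ∈ Lg B n) ∧
      Function.Bijective (pi0Map (continuous_lgMap φ.toRingHom n hcont)) :=
  pi0_Lg_bijective_of_dense_spectral_general φ hcont hdense hspec
end

section
/- Let φ : A → B be a dense and spectral morphism of unital complex Banach algebras. Then gsr A = gsr B. -/
/-- The general stable rank: the least `n ≥ 1` such that `GL_m(A)` acts transitively on
`Lg_m(A)` for all `m ≥ n` (an invertible matrix acting on a column vector by
left multiplication). -/
noncomputable def gsr (A : Type*) [Ring A] : ℕ∞ :=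
  sInf {c : ℕ∞ | ∃ n : ℕ, c = n ∧ 1 ≤ n ∧ ∀ m : ℕ, n ≤ m →
    ∀ a ∈ Lg A m, ∀ b ∈ Lg A m,
      ∃ g : Matrix (Fin m) (Fin m) A, IsUnit g ∧ g.mulVec a = b}

/-!
A spectral morphism `φ : A → B` reflects invertibility, and so, when it is dense, does the induced
map on `m × m` matrices. Indeed, if `φ(M)` is invertible then, by density, some `φ(N)` is so close
to `φ(M)⁻¹` that `φ(MN)` and `φ(NM)` lie in the open set of invertible matrices with invertible
corner entry; a matrix whose image lies there is invertible by its Schur complement with respect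
to that corner and induction on the size.

The orbits of `GL_m` on unimodular columns are then compared through elementary perturbations:
if `x ⬝ c = 1` and `1 + x ⬝ v` is invertible, then `c` and `c + v` lie in the same orbit. As
invertibility is an open condition, every unimodular `b` over `B` lies in the orbit of some
`φ(a)` with `a` unimodular over `A`; and an invertible matrix over `B` moving `φ(a)` to `φ(a')` can
be approximated by `φ(H)` with `H` invertible and `H a` a perturbation of `a'` of this kind. So
`GL_m(A)` is transitive on `Lg_m(A)` if and only if `GL_m(B)` is transitive on `Lg_m(B)`.
-/

open Matrix Topology

def GLOrbitRel (R : Type*) [Ring R] {ι : Type*} [Fintype ι] [DecidableEq ι] (a b : ι → R) :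
    Prop :=
  ∃ g : Matrix ι ι R, IsUnit g ∧ g *ᵥ a = b

def IsTransitiveOnLg (R : Type*) [Ring R] (m : ℕ) : Prop :=
  ∀ a ∈ Lg R m, ∀ b ∈ Lg R m, GLOrbitRel R a b

theorem gsr_eq_sInf (R : Type*) [Ring R] :
    gsr R = sInf {c : ℕ∞ | ∃ n : ℕ, c = n ∧ 1 ≤ n ∧ ∀ m : ℕ, n ≤ m → IsTransitiveOnLg R m} :=
  rfl

section Algebra

variable {R S : Type*} [Ring R] [Ring S]

namespace GLOrbitRel

variable {ι : Type*} [Fintype ι] [DecidableEq ι] {a b c : ι → R}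

theorem of_isUnit {g : Matrix ι ι R} (hg : IsUnit g) (a : ι → R) : GLOrbitRel R a (g *ᵥ a) :=
  ⟨g, hg, rfl⟩

theorem symm (h : GLOrbitRel R a b) : GLOrbitRel R b a := by
  obtain ⟨g, hg, rfl⟩ := h
  refine ⟨↑hg.unit⁻¹, hg.unit⁻¹.isUnit, ?_⟩
  rw [mulVec_mulVec, IsUnit.val_inv_mul, one_mulVec]

theorem trans (hab : GLOrbitRel R a b) (hbc : GLOrbitRel R b c) : GLOrbitRel R a c := by
  obtain ⟨g, hg, rfl⟩ := hab
  obtain ⟨h, hh, rfl⟩ := hbc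
  exact ⟨h * g, hh.mul hg, (mulVec_mulVec _ _ _).symm⟩

theorem map (f : R →+* S) (h : GLOrbitRel R a b) : GLOrbitRel S (f ∘ a) (f ∘ b) := by
  obtain ⟨g, hg, rfl⟩ := h
  exact ⟨f.mapMatrix g, hg.map _, funext fun i => (f.map_mulVec g a i).symm⟩

/-- The witness is `1 + v xᵀ`, with inverse `1 - v (1 + x ⬝ v)⁻¹ xᵀ`. -/
theorem add {x v : ι → R} (hx : x ⬝ᵥ c = 1) (hv : IsUnit (1 + x ⬝ᵥ v)) :
    GLOrbitRel R c (c + v) := by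
  obtain ⟨t, hst, hts⟩ := isUnit_iff_exists.mp hv
  have hr : vecMulVec v (t • x) + vecMulVec v ((x ⬝ᵥ v) • t • x) = vecMulVec v x := by
    rw [← vecMulVec_add, smul_smul, ← add_smul, ← one_add_mul, hst, one_smul]
  have hl : vecMulVec v (t • x) + vecMulVec v ((t • x ⬝ᵥ v) • x) = vecMulVec v x := by
    rw [← vecMulVec_add, smul_dotProduct, smul_eq_mul, ← add_smul, ← mul_one_add, hts, one_smul]
  refine ⟨1 + vecMulVec v x, isUnit_iff_exists.mpr ⟨1 - vecMulVec v (t • x), ?_, ?_⟩, ?_⟩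
  · rw [add_mul, one_mul, mul_sub, mul_one, vecMulVec_mul_vecMulVec, ← hr]
    abel
  · rw [mul_add, mul_one, sub_mul, one_mul, vecMulVec_mul_vecMulVec, ← hl]
    abel
  · rw [add_mulVec, one_mulVec, vecMulVec_mulVec, hx, MulOpposite.op_one, one_smul]

end GLOrbitRel

theorem mem_Lg_iff {m : ℕ} {a : Fin m → R} : a ∈ Lg R m ↔ ∃ x, x ⬝ᵥ a = 1 := Iff.rfl

theorem GLOrbitRel.mem_Lg {m : ℕ} {a b : Fin m → R} (h : GLOrbitRel R a b) (ha : a ∈ Lg R m) :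
    b ∈ Lg R m := by
  obtain ⟨g, hg, rfl⟩ := h
  obtain ⟨x, hx⟩ := mem_Lg_iff.mp ha
  refine mem_Lg_iff.mpr ⟨x ᵥ* ↑hg.unit⁻¹, ?_⟩
  rw [← dotProduct_mulVec, mulVec_mulVec, IsUnit.val_inv_mul, one_mulVec, hx]

theorem comp_mem_Lg (f : R →+* S) {m : ℕ} {a : Fin m → R} (ha : a ∈ Lg R m) :
    f ∘ a ∈ Lg S m := by
  obtain ⟨x, hx⟩ := mem_Lg_iff.mp ha
  exact mem_Lg_iff.mpr ⟨f ∘ x, by rw [← f.map_dotProduct, hx, map_one]⟩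

end Algebra

namespace Matrix

variable {R S : Type*} [Ring R] [Ring S] {l n : Type*} [Fintype l] [Fintype n] [DecidableEq l]
  [DecidableEq n]

theorem isUnit_fromBlocks_zero_zero_iff {a : Matrix l l R} {d : Matrix n n R} :
    IsUnit (fromBlocks a 0 0 d) ↔ IsUnit a ∧ IsUnit d := by
  constructor
  · intro h
    obtain ⟨N, hr, hl⟩ := isUnit_iff_exists.mp h
    rw [← fromBlocks_toBlocks N, fromBlocks_multiply, ← fromBlocks_one, fromBlocks_inj] at hr hl
    simp only [Matrix.zero_mul, Matrix.mul_zero, add_zero, zero_add] at hr hl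
    exact ⟨isUnit_iff_exists.mpr ⟨_, hr.1, hl.1⟩, isUnit_iff_exists.mpr ⟨_, hr.2.2.2, hl.2.2.2⟩⟩
  · rintro ⟨ha, hd⟩
    obtain ⟨a', ha₁, ha₂⟩ := isUnit_iff_exists.mp ha
    obtain ⟨d', hd₁, hd₂⟩ := isUnit_iff_exists.mp hd
    refine isUnit_iff_exists.mpr ⟨fromBlocks a' 0 0 d', ?_, ?_⟩ <;>
      simp [fromBlocks_multiply, ha₁, ha₂, hd₁, hd₂]

theorem isUnit_fromBlocks_one_zero₁₂ (c : Matrix n l R) :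
    IsUnit (fromBlocks 1 0 c 1 : Matrix (l ⊕ n) (l ⊕ n) R) :=
  isUnit_iff_exists.mpr ⟨fromBlocks 1 0 (-c) 1, by simp [fromBlocks_multiply],
    by simp [fromBlocks_multiply]⟩

theorem isUnit_fromBlocks_one_zero₂₁ (b : Matrix l n R) :
    IsUnit (fromBlocks 1 b 0 1 : Matrix (l ⊕ n) (l ⊕ n) R) :=
  isUnit_iff_exists.mpr ⟨fromBlocks 1 (-b) 0 1, by simp [fromBlocks_multiply],
    by simp [fromBlocks_multiply]⟩

-- Mathlib's `isUnit_fromBlocks_iff_of_invertible₁₁` assumes `R` commutative.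
theorem isUnit_fromBlocks_iff_of_invertible₁₁' (a : Matrix l l R) (b : Matrix l n R)
    (c : Matrix n l R) (d : Matrix n n R) [Invertible a] :
    IsUnit (fromBlocks a b c d) ↔ IsUnit (d - c * ⅟a * b) := by
  have hLDU : fromBlocks a b c d =
      fromBlocks 1 0 (c * ⅟a) 1 * fromBlocks a 0 0 (d - c * ⅟a * b) *
        fromBlocks 1 (⅟a * b) 0 1 := by
    simp only [fromBlocks_multiply, Matrix.mul_zero, Matrix.zero_mul, add_zero, zero_add,
      Matrix.one_mul, Matrix.mul_one, invOf_mul_self, Matrix.mul_invOf_cancel_left,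
      Matrix.mul_assoc, add_sub_cancel]
  rw [hLDU, ← (isUnit_fromBlocks_one_zero₁₂ (c * ⅟a)).unit_spec,
    ← (isUnit_fromBlocks_one_zero₂₁ (⅟a * b)).unit_spec,
    Matrix.mul_assoc, Units.isUnit_units_mul, Units.isUnit_mul_units,
    isUnit_fromBlocks_zero_zero_iff, and_iff_right (isUnit_of_invertible a)]

theorem isUnit_fromBlocks_of_isUnit_mapMatrix (ψ : R →+* S)
    [IsLocalHom (ψ.mapMatrix : Matrix n n R →+* Matrix n n S)] {a : Matrix l l R}
    {b : Matrix l n R} {c : Matrix n l R} {d : Matrix n n R} [Invertible a]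
    (h : IsUnit (ψ.mapMatrix (fromBlocks a b c d))) : IsUnit (fromBlocks a b c d) := by
  have : Invertible (a.map ψ) := Invertible.map (ψ.mapMatrix : Matrix l l R →+* Matrix l l S) a
  rw [RingHom.mapMatrix_apply, fromBlocks_map, isUnit_fromBlocks_iff_of_invertible₁₁'] at h
  have hinv : (⅟a).map ψ = ⅟(a.map ψ) :=
    map_invOf (ψ.mapMatrix : Matrix l l R →+* Matrix l l S) a (ifr := this)
  rw [isUnit_fromBlocks_iff_of_invertible₁₁', ← isUnit_map_iff ψ.mapMatrix, map_sub,
    RingHom.mapMatrix_apply, RingHom.mapMatrix_apply, Matrix.map_mul, Matrix.map_mul, hinv]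
  exact h

theorem isUnit_of_isUnit_mapMatrix_of_isUnit_apply {ι : Type*} [Fintype ι] [DecidableEq ι]
    (ψ : R →+* S) {i₀ : ι}
    [IsLocalHom (ψ.mapMatrix : Matrix {i // i ≠ i₀} {i // i ≠ i₀} R →+* _)] {P : Matrix ι ι R}
    (hP : IsUnit (ψ.mapMatrix P)) (h₀ : IsUnit (P i₀ i₀)) : IsUnit P := by
  let e := (Equiv.sumCompl (· = i₀)).symm
  rw [← isUnit_map_iff (reindexRingEquiv R e), coe_reindexRingEquiv,
    ← fromBlocks_toBlocks (reindex e e P)]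
  have hcorner : (reindex e e P).toBlocks₁₁ = scalar _ (P i₀ i₀) := by
    ext ⟨i, rfl⟩ ⟨j, rfl⟩
    simp [e, toBlocks₁₁]
  have : Invertible (reindex e e P).toBlocks₁₁ := (hcorner ▸ h₀.map (scalar _)).invertible
  refine isUnit_fromBlocks_of_isUnit_mapMatrix ψ ?_
  rw [fromBlocks_toBlocks, ← isUnit_map_iff (reindexRingEquiv S e).symm]
  convert hP using 1
  ext i j
  simp

end Matrix

theorem Matrix.isOpen_setOf_isUnit {n B : Type*} [Fintype n] [DecidableEq n] [NormedRing B]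
    [CompleteSpace B] : IsOpen {M : Matrix n n B | IsUnit M} := by
  -- the `ℓ∞` operator norm induces the product topology on matrices
  let := Matrix.linftyOpNormedRing (n := n) (α := B)
  have : CompleteSpace (Matrix n n B) := (inferInstance : CompleteSpace (n → n → B))
  exact @Units.isOpen _ _ (@instHasSummableGeomSeriesOfCompleteSpace _ _ this)

theorem IsLocalHom.of_denseRange {R S : Type*} [Ring R] [Ring S] [TopologicalSpace S]
    [IsTopologicalRing S] (ψ : R →+* S) (hψ : DenseRange ψ) {V : Set S} (hV : V ∈ 𝓝 1)
    (hV_unit : ∀ r, ψ r ∈ V → IsUnit r) : IsLocalHom ψ := by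
  refine ⟨fun r ⟨u, hu⟩ => ?_⟩
  have hnhds : {y | ψ r * y ∈ V ∧ y * ψ r ∈ V} ∈ 𝓝 (↑u⁻¹ : S) := by
    refine Filter.inter_mem ?_ ?_
    · exact (continuous_const_mul (ψ r)).continuousAt.preimage_mem_nhds (by simpa [← hu] using hV)
    · exact (continuous_mul_const (ψ r)).continuousAt.preimage_mem_nhds (by simpa [← hu] using hV)
  obtain ⟨s, hrs, hsr⟩ := hψ.mem_nhds hnhds
  obtain ⟨t, hrst⟩ := (hV_unit (r * s) (by rwa [map_mul])).exists_right_inv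
  obtain ⟨t', hsrt⟩ := (hV_unit (s * r) (by rwa [map_mul])).exists_left_inv
  exact isUnit_iff_exists_and_exists.mpr
    ⟨⟨s * t, by rw [← mul_assoc, hrst]⟩, ⟨t' * s, by rw [mul_assoc, hsrt]⟩⟩

section DenseLocal

variable {A B : Type*} [Ring A] [NormedRing B] [CompleteSpace B] (φ : A →+* B) [IsLocalHom φ]

theorem RingHom.isLocalHom_mapMatrix_of_denseRange (hφ : DenseRange φ) (ι : Type*) [Fintype ι]
    [DecidableEq ι] : IsLocalHom (φ.mapMatrix : Matrix ι ι A →+* Matrix ι ι B) := by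
  induction h : Fintype.card ι generalizing ι with
  | zero =>
    have := Fintype.card_eq_zero_iff.mp h
    exact ⟨fun M _ => isUnit_of_subsingleton M⟩
  | succ m ih =>
    obtain ⟨i₀⟩ : Nonempty ι := Fintype.card_pos_iff.mp (by omega)
    have := ih {i // i ≠ i₀} (by rw [Fintype.card_subtype_compl, Fintype.card_subtype_eq]; omega)
    refine .of_denseRange φ.mapMatrix (.piMap fun _ => .piMap fun _ => hφ)
      (V := {Z : Matrix ι ι B | IsUnit Z ∧ IsUnit (Z i₀ i₀)}) ?_ fun P hP => ?_
    · refine (isOpen_setOf_isUnit.inter (Units.isOpen.preimage ?_)).mem_nhds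
        ⟨isUnit_one, by simp⟩
      exact continuous_id.matrix_elem i₀ i₀
    · exact isUnit_of_isUnit_mapMatrix_of_isUnit_apply φ hP.1 (isUnit_of_map_unit φ _ hP.2)

variable {φ} {m : ℕ}

theorem mem_Lg_of_comp_mem_Lg (hφ : DenseRange φ) {a : Fin m → A} (h : φ ∘ a ∈ Lg B m) :
    a ∈ Lg A m := by
  obtain ⟨z, hz⟩ := mem_Lg_iff.mp h
  have hU : IsOpen {w : Fin m → B | IsUnit (w ⬝ᵥ φ ∘ a)} :=
    Units.isOpen.preimage (continuous_id.dotProduct continuous_const)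
  obtain ⟨x, hx⟩ := (DenseRange.piMap fun _ => hφ).exists_mem_open hU ⟨z, by simp [hz]⟩
  obtain ⟨t, ht⟩ := (isUnit_of_map_unit φ (x ⬝ᵥ a) (by rwa [φ.map_dotProduct])).exists_left_inv
  exact mem_Lg_iff.mpr ⟨t • x, by rw [smul_dotProduct, smul_eq_mul, ht]⟩

theorem exists_mem_Lg_glOrbitRel_comp (hφ : DenseRange φ) {b : Fin m → B} (hb : b ∈ Lg B m) :
    ∃ a ∈ Lg A m, GLOrbitRel B b (φ ∘ a) := by
  obtain ⟨y, hy⟩ := mem_Lg_iff.mp hb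
  have hU : IsOpen {w : Fin m → B | IsUnit (1 + y ⬝ᵥ (w - b))} :=
    Units.isOpen.preimage (by fun_prop)
  obtain ⟨a, ha⟩ : ∃ a : Fin m → A, φ ∘ a ∈ _ :=
    (DenseRange.piMap fun _ => hφ).exists_mem_open hU ⟨b, by simp⟩
  have hba : GLOrbitRel B b (φ ∘ a) := by simpa using GLOrbitRel.add hy ha
  exact ⟨a, mem_Lg_of_comp_mem_Lg hφ (hba.mem_Lg hb), hba⟩

theorem GLOrbitRel.of_comp (hφ : DenseRange φ) {a a' : Fin m → A} (ha' : a' ∈ Lg A m)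
    (h : GLOrbitRel B (φ ∘ a) (φ ∘ a')) : GLOrbitRel A a a' := by
  obtain ⟨x, hx⟩ := mem_Lg_iff.mp ha'
  obtain ⟨g, hg, hga⟩ := h
  let U := {Y : Matrix (Fin m) (Fin m) B |
    IsUnit Y ∧ IsUnit (1 + φ ∘ x ⬝ᵥ (Y *ᵥ φ ∘ a - φ ∘ a'))}
  have hU : IsOpen U := isOpen_setOf_isUnit.inter (Units.isOpen.preimage (by fun_prop))
  obtain ⟨H, hH, hHa⟩ : ∃ H : Matrix (Fin m) (Fin m) A, φ.mapMatrix H ∈ U :=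
    (DenseRange.piMap fun _ => .piMap fun _ => hφ).exists_mem_open hU ⟨g, hg, by simp [hga]⟩
  have := φ.isLocalHom_mapMatrix_of_denseRange hφ (Fin m)
  have hv : IsUnit (1 + x ⬝ᵥ (H *ᵥ a - a')) := by
    refine isUnit_of_map_unit φ _ ?_
    convert hHa using 1
    have hcomp : φ ∘ (H *ᵥ a - a') = φ.mapMatrix H *ᵥ φ ∘ a - φ ∘ a' := by
      ext i
      simp [RingHom.map_mulVec]
    rw [map_add, map_one, φ.map_dotProduct, hcomp]
  have hHa' := GLOrbitRel.add hx hv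
  rw [add_sub_cancel] at hHa'
  exact (GLOrbitRel.of_isUnit (isUnit_of_map_unit φ.mapMatrix H hH) a).trans hHa'.symm

theorem isTransitiveOnLg_iff_of_denseRange (hφ : DenseRange φ) :
    IsTransitiveOnLg A m ↔ IsTransitiveOnLg B m := by
  constructor
  · intro hA b hb b' hb'
    obtain ⟨a, ha, hba⟩ := exists_mem_Lg_glOrbitRel_comp hφ hb
    obtain ⟨a', ha', hba'⟩ := exists_mem_Lg_glOrbitRel_comp hφ hb'
    exact hba.trans (((hA a ha a' ha').map φ).trans hba'.symm)
  · intro hB a ha a' ha'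
    exact .of_comp hφ ha' (hB _ (comp_mem_Lg φ ha) _ (comp_mem_Lg φ ha'))

end DenseLocal

theorem AlgHom.isLocalHom_of_spectrum_eq {R A B : Type*} [CommSemiring R] [Ring A] [Ring B]
    [Algebra R A] [Algebra R B] (φ : A →ₐ[R] B) (h : ∀ a, spectrum R (φ a) = spectrum R a) :
    IsLocalHom φ :=
  ⟨fun a ha => by rwa [← spectrum.zero_notMem_iff R, ← h, spectrum.zero_notMem_iff]⟩

theorem gsr_eq_gsr_of_dense_spectral_general {A B : Type*}
    [NormedRing A] [NormedAlgebra ℂ A]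
    [NormedRing B] [NormedAlgebra ℂ B] [CompleteSpace B]
    (φ : A →ₐ[ℂ] B) (hdense : DenseRange φ)
    (hspec : ∀ a : A, spectrum ℂ (φ a) = spectrum ℂ a) :
    gsr A = gsr B := by
  have := φ.isLocalHom_of_spectrum_eq hspec
  simp only [gsr_eq_sInf, isTransitiveOnLg_iff_of_denseRange (φ := (φ : A →+* B)) hdense]

/-- If `φ : A → B` is a dense and spectral morphism of unital complex Banach algebras,
then `gsr A = gsr B`. -/
theorem gsr_eq_gsr_of_dense_spectral {A B : Type*}
    [NormedRing A] [NormedAlgebra ℂ A] [CompleteSpace A]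
    [NormedRing B] [NormedAlgebra ℂ B] [CompleteSpace B]
    (φ : A →ₐ[ℂ] B) (hcont : Continuous φ) (hdense : DenseRange φ)
    (hspec : ∀ a : A, spectrum ℂ (φ a) = spectrum ℂ a) :
    gsr A = gsr B :=
  gsr_eq_gsr_of_dense_spectral_general φ hdense hspec
end
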